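/- Let $\Gamma$ be a countable group with a fixed enumeration $\Gamma = (\gamma_s)_{s=1}^\infty$, let $(X,\mu)$ be a standard probability space, and let $a, b$ be measure-preserving actions of $\Gamma$ on $(X,\mu)$. Define $d_f(a,b) = \sum_{t=1}^\infty 2^{-t} \sup_k d_H(C_{t,k}(a), C_{t,k}(b))$. Then $d_f(a,b) = 0$ if and only if $a$ and $b$ are weakly equivalent. -/

import Mathlib

/-!
Weak containment of `a` in `b` says exactly that every point `M^𝒜_{t,k}(a)` is a limit of
points `M^ℬ_{t,k}(b)`, i.e. `C_{t,k}(a) ⊆ C_{t,k}(b)` for all `t, k`; surjectivity of the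
enumeration lets any finite `F ⊆ Γ` be handled by a single `t`. The coordinates of
`M^𝒜_{t,k}` sum to `t`, so every `C_{t,k}` lies in the `ℓ¹`-ball of radius `t` and
`d_H(C_{t,k}(a), C_{t,k}(b)) ≤ 2t` uniformly in `k`. Hence the series converges, it vanishes
iff every `d_H(C_{t,k}(a), C_{t,k}(b))` does, and for these closed sets at finite Hausdorff
distance that means `C_{t,k}(a) = C_{t,k}(b)`.
-/

open MeasureTheory Metric

noncomputable section

/-- A measure-preserving action of a group `Γ` on a measure space `(X, μ)`. -/
structure MPAction (Γ : Type*) [Group Γ] (X : Type*) [MeasurableSpace X]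
    (μ : Measure X) where
  toFun : Γ → X → X
  measurePreserving : ∀ γ : Γ, MeasurePreserving (toFun γ) μ μ
  map_one : ∀ x : X, toFun 1 x = x
  map_mul : ∀ (γ δ : Γ) (x : X), toFun (γ * δ) x = toFun γ (toFun δ x)

/-- A finite measurable partition: the pieces are measurable, pairwise disjoint, and
cover the whole space. -/
def IsPartition {Y : Type*} [MeasurableSpace Y] {n : ℕ} (A : Fin n → Set Y) : Prop :=
  (∀ i, MeasurableSet (A i)) ∧ (∀ i j : Fin n, i ≠ j → Disjoint (A i) (A j)) ∧
    (⋃ i, A i) = Set.univ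

/-- `a` is weakly contained in `b`. -/
def WeaklyContained {Γ : Type*} [Group Γ] {Y : Type*} [MeasurableSpace Y]
    (ν : Measure Y) (a b : MPAction Γ Y ν) : Prop :=
  ∀ (n : ℕ) (A : Fin n → Set Y), IsPartition A → ∀ (F : Finset Γ) (ε : ℝ), 0 < ε →
    ∃ B : Fin n → Set Y, IsPartition B ∧
      ∀ γ ∈ F, ∀ i j : Fin n,
        |(ν (a.toFun γ ⁻¹' A i ∩ A j)).toReal - (ν (b.toFun γ ⁻¹' B i ∩ B j)).toReal| < ε

/-- The point `M^𝒜_{t,k}(c) ∈ [0,1]^{t × k × k}` whose `(s, l, m)` coordinate is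
`ν(γₛᶜ A_l ∩ A_m)`, where `(γₛ)` is the fixed enumeration `e` of `Γ`. The ambient space
`[0,1]^{t × k × k}` carries the metric given by the sum of coordinate distances, i.e. the
`ℓ¹` (taxicab) metric, realized by `PiLp 1`. -/
def Mpoint {Γ Y : Type*} [Group Γ] [MeasurableSpace Y] (ν : Measure Y) (e : ℕ → Γ)
    (c : Γ → Y → Y) (t k : ℕ) (A : Fin k → Set Y) :
    PiLp 1 (fun _ : Fin t × Fin k × Fin k => ℝ) :=
  WithLp.toLp 1 (fun p : Fin t × Fin k × Fin k => (ν (c (e p.1) ⁻¹' A p.2.1 ∩ A p.2.2)).toReal)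

/-- `C_{t,k}(c)`: the closure in `[0,1]^{t × k × k}` (with the sum metric) of the set of
points `M^𝒜_{t,k}(c)` over all measurable partitions `𝒜` of the space into `k` pieces. -/
def Cset {Γ Y : Type*} [Group Γ] [MeasurableSpace Y] (ν : Measure Y) (e : ℕ → Γ)
    (c : Γ → Y → Y) (t k : ℕ) : Set (PiLp 1 (fun _ : Fin t × Fin k × Fin k => ℝ)) :=
  closure {x | ∃ A : Fin k → Set Y, IsPartition A ∧ x = Mpoint ν e c t k A}

lemma Metric.hausdorffEDist_le_of_subset_closedBall {α : Type*} [PseudoMetricSpace α]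
    {s t : Set α} {x : α} {r : ℝ} (hs : s ⊆ closedBall x r) (ht : t ⊆ closedBall x r)
    (hne : s.Nonempty ↔ t.Nonempty) : hausdorffEDist s t ≤ ENNReal.ofReal (2 * r) := by
  have key : ∀ {u v : Set α}, u ⊆ closedBall x r → v ⊆ closedBall x r → v.Nonempty →
      ∀ y ∈ u, ∃ z ∈ v, edist y z ≤ ENNReal.ofReal (2 * r) := by
    intro u v hu hv ⟨z, hz⟩ y hy
    refine ⟨z, hz, ?_⟩
    rw [edist_dist, two_mul]
    exact ENNReal.ofReal_le_ofReal
      ((dist_triangle_right y z x).trans (add_le_add (hu hy) (hv hz)))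
  exact hausdorffEDist_le_of_mem_edist (fun y hy => key hs ht (hne.1 ⟨y, hy⟩) y hy)
    (fun y hy => key ht hs (hne.2 ⟨y, hy⟩) y hy)

lemma PiLp.dist_le_card_mul_of_L1 {ι : Type*} [Fintype ι] {x y : PiLp 1 (fun _ : ι => ℝ)}
    {δ : ℝ} (h : ∀ i, |x i - y i| ≤ δ) : dist x y ≤ Fintype.card ι * δ := by
  rw [PiLp.dist_eq_of_L1, ← nsmul_eq_mul]
  exact Finset.sum_le_card_nsmul _ _ _ fun i _ => (Real.dist_eq _ _).trans_le (h i)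

lemma Real.iSup_eq_zero_iff_of_nonneg {ι : Sort*} {f : ι → ℝ} (hf : ∀ i, 0 ≤ f i)
    (hbdd : BddAbove (Set.range f)) : ⨆ i, f i = 0 ↔ ∀ i, f i = 0 :=
  ⟨fun h i => le_antisymm (h ▸ le_ciSup hbdd i) (hf i), fun h => by simp [h]⟩

lemma tsum_mul_iSup_eq_zero_iff {ι : Sort*} {w B : ℕ → ℝ} {f : ℕ → ι → ℝ}
    (hw : ∀ t, 0 < w t) (hf : ∀ t i, 0 ≤ f t i) (hfB : ∀ t i, f t i ≤ B t) (hB : ∀ t, 0 ≤ B t)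
    (hsum : Summable fun t => w t * B t) :
    ∑' t, w t * ⨆ i, f t i = 0 ↔ ∀ t i, f t i = 0 := by
  have hterm_nonneg : ∀ t, 0 ≤ w t * ⨆ i, f t i :=
    fun t => mul_nonneg (hw t).le (Real.iSup_nonneg (hf t))
  have hsummable : Summable fun t => w t * ⨆ i, f t i :=
    hsum.of_nonneg_of_le hterm_nonneg fun t =>
      mul_le_mul_of_nonneg_left (Real.iSup_le (hfB t) (hB t)) (hw t).le
  rw [← hsummable.hasSum_iff, hasSum_zero_iff_of_nonneg hterm_nonneg, funext_iff]
  refine forall_congr' fun t => ?_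
  rw [Pi.zero_apply, mul_eq_zero, or_iff_right (hw t).ne',
    Real.iSup_eq_zero_iff_of_nonneg (hf t) ⟨B t, Set.forall_mem_range.2 (hfB t)⟩]

lemma summable_inv_two_pow_mul_two_mul_succ :
    Summable fun t : ℕ => (1 / 2 ^ (t + 1) : ℝ) * (2 * (t + 1)) := by
  refine ((summable_pow_mul_geometric_of_norm_lt_one 1 (r := (1 / 2 : ℝ)) (by norm_num)).add
    summable_geometric_two).congr fun t => ?_
  rw [pow_succ, one_div_pow]
  field_simp
  ring

section Cset

variable {Γ Y : Type*} [Group Γ] [MeasurableSpace Y] {ν : Measure Y}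

lemma IsPartition.sum_measure_preimage_inter [IsProbabilityMeasure ν] {k : ℕ}
    {A : Fin k → Set Y} (hA : IsPartition A) {f : Y → Y} (hf : Measurable f) :
    ∑ p : Fin k × Fin k, (ν (f ⁻¹' A p.1 ∩ A p.2)).toReal = 1 := by
  obtain ⟨hmeas, hdisj, hcov⟩ := hA
  have hcover : (⋃ p : Fin k × Fin k, f ⁻¹' A p.1 ∩ A p.2) = Set.univ := by
    have hmem : ∀ y, ∃ i, y ∈ A i := fun y => Set.mem_iUnion.1 (hcov ▸ Set.mem_univ y)
    refine Set.eq_univ_of_forall fun x => ?_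
    obtain ⟨l, hl⟩ := hmem (f x)
    obtain ⟨m, hm⟩ := hmem x
    exact Set.mem_iUnion.2 ⟨(l, m), hl, hm⟩
  have hpairwise : Pairwise (Function.onFun Disjoint
      fun p : Fin k × Fin k => f ⁻¹' A p.1 ∩ A p.2) := by
    rintro ⟨l, m⟩ ⟨l', m'⟩ hne
    by_cases hl : l = l'
    · have hm : m ≠ m' := fun hm => hne (Prod.ext hl hm)
      exact (hdisj _ _ hm).mono inf_le_right inf_le_right
    · exact ((hdisj _ _ hl).preimage f).mono inf_le_left inf_le_left
  have h := measure_iUnion (μ := ν) hpairwise fun p => (hf (hmeas p.1)).inter (hmeas p.2)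
  rw [hcover, measure_univ, tsum_fintype] at h
  rw [← ENNReal.toReal_sum fun p _ => measure_ne_top ν _, ← h, ENNReal.toReal_one]

lemma norm_mpoint [IsProbabilityMeasure ν] (e : ℕ → Γ) {c : Γ → Y → Y}
    (hc : ∀ γ, Measurable (c γ)) (t : ℕ) {k : ℕ} {A : Fin k → Set Y} (hA : IsPartition A) :
    ‖Mpoint ν e c t k A‖ = t := by
  rw [PiLp.norm_eq_of_L1, Fintype.sum_prod_type]
  simp [Mpoint, hA.sum_measure_preimage_inter (hc _)]

lemma cset_subset_closedBall [IsProbabilityMeasure ν] (e : ℕ → Γ) {c : Γ → Y → Y}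
    (hc : ∀ γ, Measurable (c γ)) (t k : ℕ) : Cset ν e c t k ⊆ closedBall 0 t := by
  refine closure_minimal ?_ isClosed_closedBall
  rintro _ ⟨A, hA, rfl⟩
  exact mem_closedBall_zero_iff.2 (norm_mpoint e hc t hA).le

lemma cset_nonempty_iff (e : ℕ → Γ) (c : Γ → Y → Y) (t k : ℕ) :
    (Cset ν e c t k).Nonempty ↔ ∃ A : Fin k → Set Y, IsPartition A :=
  closure_nonempty_iff.trans
    ⟨fun ⟨_, A, hA, _⟩ => ⟨A, hA⟩, fun ⟨A, hA⟩ => ⟨_, A, hA, rfl⟩⟩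

lemma hausdorffEDist_cset_le [IsProbabilityMeasure ν] (e : ℕ → Γ) {c d : Γ → Y → Y}
    (hc : ∀ γ, Measurable (c γ)) (hd : ∀ γ, Measurable (d γ)) (t k : ℕ) :
    hausdorffEDist (Cset ν e c t k) (Cset ν e d t k) ≤ ENNReal.ofReal (2 * t) :=
  hausdorffEDist_le_of_subset_closedBall (cset_subset_closedBall e hc t k)
    (cset_subset_closedBall e hd t k) ((cset_nonempty_iff e c t k).trans
      (cset_nonempty_iff e d t k).symm)

lemma hausdorffDist_cset_le [IsProbabilityMeasure ν] (e : ℕ → Γ) {c d : Γ → Y → Y}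
    (hc : ∀ γ, Measurable (c γ)) (hd : ∀ γ, Measurable (d γ)) (t k : ℕ) :
    hausdorffDist (Cset ν e c t k) (Cset ν e d t k) ≤ 2 * t :=
  ENNReal.toReal_le_of_le_ofReal (by positivity) (hausdorffEDist_cset_le e hc hd t k)

lemma hausdorffDist_cset_eq_zero_iff [IsProbabilityMeasure ν] (e : ℕ → Γ)
    {c d : Γ → Y → Y} (hc : ∀ γ, Measurable (c γ)) (hd : ∀ γ, Measurable (d γ)) (t k : ℕ) :
    hausdorffDist (Cset ν e c t k) (Cset ν e d t k) = 0 ↔ Cset ν e c t k = Cset ν e d t k :=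
  isClosed_closure.hausdorffDist_zero_iff_eq isClosed_closure
    (ne_top_of_le_ne_top ENNReal.ofReal_ne_top (hausdorffEDist_cset_le e hc hd t k))

end Cset

section WeakContainment

variable {Γ X : Type*} [Group Γ] [MeasurableSpace X] {μ : Measure X} {a b : MPAction Γ X μ}

lemma cset_subset_of_weaklyContained (e : ℕ → Γ) (hab : WeaklyContained μ a b) (t k : ℕ) :
    Cset μ e a.toFun t k ⊆ Cset μ e b.toFun t k := by
  classical
  refine closure_minimal ?_ isClosed_closure
  rintro _ ⟨A, hA, rfl⟩
  refine Metric.mem_closure_iff.2 fun ε hε => ?_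
  set N : ℝ := (Fintype.card (Fin t × Fin k × Fin k) : ℝ)
  have hδ : 0 < ε / (N + 1) := by positivity
  obtain ⟨B, hB, hclose⟩ := hab k A hA ((Finset.range t).image e) _ hδ
  refine ⟨_, ⟨B, hB, rfl⟩, ?_⟩
  calc _ ≤ N * (ε / (N + 1)) := PiLp.dist_le_card_mul_of_L1 fun p =>
        (hclose (e p.1) (Finset.mem_image_of_mem e (Finset.mem_range.2 p.1.2)) _ _).le
    _ < ε := by
        rw [← mul_div_assoc, div_lt_iff₀ (by positivity)]
        nlinarith

lemma weaklyContained_of_cset_subset {e : ℕ → Γ} (he : Function.Surjective e)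
    (h : ∀ t k, Cset μ e a.toFun (t + 1) k ⊆ Cset μ e b.toFun (t + 1) k) :
    WeaklyContained μ a b := by
  intro n A hA F ε hε
  set t := F.sup (Function.surjInv he)
  have hA_mem : Mpoint μ e a.toFun (t + 1) n A ∈ Cset μ e b.toFun (t + 1) n :=
    h t n (subset_closure ⟨A, hA, rfl⟩)
  obtain ⟨_, ⟨B, hB, rfl⟩, hdist⟩ := Metric.mem_closure_iff.1 hA_mem ε hε
  refine ⟨B, hB, fun γ hγ i j => ?_⟩
  have hs : Function.surjInv he γ < t + 1 := Nat.lt_succ_of_le (Finset.le_sup hγ)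
  have hcoord := (PiLp.dist_apply_le _ _ (⟨_, hs⟩, i, j)).trans_lt hdist
  simpa [Mpoint, Function.surjInv_eq he γ, Real.dist_eq] using hcoord

lemma weaklyContained_iff_cset_subset {e : ℕ → Γ} (he : Function.Surjective e) :
    WeaklyContained μ a b ↔
      ∀ t k, Cset μ e a.toFun (t + 1) k ⊆ Cset μ e b.toFun (t + 1) k :=
  ⟨fun hab _ _ => cset_subset_of_weaklyContained e hab _ _, weaklyContained_of_cset_subset he⟩

end WeakContainment

theorem stmt_13_general {Γ : Type*} [Group Γ]
    {X : Type*} [MeasurableSpace X]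
    (μ : Measure X) [IsProbabilityMeasure μ]
    (e : ℕ → Γ) (he : Function.Surjective e)
    (a b : MPAction Γ X μ) :
    (∑' t : ℕ, (1 / 2 ^ (t + 1) : ℝ) *
        ⨆ k : ℕ, hausdorffDist (Cset μ e a.toFun (t + 1) k) (Cset μ e b.toFun (t + 1) k))
      = 0
    ↔ (WeaklyContained μ a b ∧ WeaklyContained μ b a) := by
  have hmeas (c : MPAction Γ X μ) (γ : Γ) : Measurable (c.toFun γ) :=
    (c.measurePreserving γ).measurable
  have hdist_le (t k : ℕ) : hausdorffDist (Cset μ e a.toFun (t + 1) k)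
      (Cset μ e b.toFun (t + 1) k) ≤ 2 * (t + 1) := by
    exact_mod_cast hausdorffDist_cset_le e (hmeas a) (hmeas b) (t + 1) k
  rw [tsum_mul_iSup_eq_zero_iff (fun t => by positivity) (fun _ _ => hausdorffDist_nonneg)
    hdist_le (fun t => by positivity) summable_inv_two_pow_mul_two_mul_succ,
    weaklyContained_iff_cset_subset he, weaklyContained_iff_cset_subset he]
  simp only [hausdorffDist_cset_eq_zero_iff e (hmeas a) (hmeas b), Set.Subset.antisymm_iff,
    forall_and]

/-- Define
`d_f(a,b) = ∑_{t=1}^∞ 2⁻ᵗ ⬝ sup_k d_H(C_{t,k}(a), C_{t,k}(b))`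
(the sum below runs over `t : ℕ`, with `t + 1` playing the role of the index
`t = 1, 2, …`). Then `d_f(a, b) = 0` iff `a` and `b` are weakly equivalent. -/
theorem stmt_13 {Γ : Type*} [Group Γ] [Countable Γ]
    {X : Type*} [MeasurableSpace X] [StandardBorelSpace X]
    (μ : Measure X) [IsProbabilityMeasure μ]
    (e : ℕ → Γ) (he : Function.Surjective e)
    (a b : MPAction Γ X μ) :
    (∑' t : ℕ, (1 / 2 ^ (t + 1) : ℝ) *
        ⨆ k : ℕ, hausdorffDist (Cset μ e a.toFun (t + 1) k) (Cset μ e b.toFun (t + 1) k))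
      = 0
    ↔ (WeaklyContained μ a b ∧ WeaklyContained μ b a) :=
  stmt_13_general μ e he a b

end
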